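/- arXiv:1808.04626 — 8 statements merged into one kernel-verified Lean document; each statement's English description precedes it below -/
import Mathlib

section
/- For a real random variable U whose values all lie in an interval of length c (i.e., any two values differ by at most c), one has E[exp(U - E[U])] ≤ exp(c²/8). -/
/-!
The weights define a probability measure on `Ω` under which both sums are expectations, and `U`
takes values in `[min U, min U + c]`; the bound is then Mathlib's Hoeffding lemma
(`hasSubgaussianMGF_of_mem_Icc`) evaluated at `t = 1`.
-/

open MeasureTheory ProbabilityTheory

lemma integral_exp_sub_integral_le_of_mem_Icc {Ω : Type*} [MeasurableSpace Ω] {μ : Measure Ω}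
    [IsProbabilityMeasure μ] {X : Ω → ℝ} {a b : ℝ} (hX : AEMeasurable X μ)
    (hab : ∀ᵐ ω ∂μ, X ω ∈ Set.Icc a b) :
    ∫ ω, Real.exp (X ω - μ[X]) ∂μ ≤ Real.exp ((b - a) ^ 2 / 8) := by
  have h := (hasSubgaussianMGF_of_mem_Icc hX hab).mgf_le 1
  simp only [mgf, one_mul] at h
  convert h using 2
  push_cast [Real.norm_eq_abs, div_pow, sq_abs]
  ring

noncomputable def PMF.ofRealWeights {Ω : Type*} [Fintype Ω] (w : Ω → ℝ) (hw_nonneg : ∀ ω, 0 ≤ w ω)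
    (hw_sum : ∑ ω, w ω = 1) : PMF Ω :=
  PMF.ofFintype (fun ω => ENNReal.ofReal (w ω)) <| by
    rw [← ENNReal.ofReal_sum_of_nonneg fun ω _ => hw_nonneg ω, hw_sum, ENNReal.ofReal_one]

lemma PMF.integral_ofRealWeights {Ω : Type*} [Fintype Ω] [MeasurableSpace Ω]
    [MeasurableSingletonClass Ω] (w : Ω → ℝ) (hw_nonneg : ∀ ω, 0 ≤ w ω)
    (hw_sum : ∑ ω, w ω = 1) (f : Ω → ℝ) :
    ∫ ω, f ω ∂(PMF.ofRealWeights w hw_nonneg hw_sum).toMeasure = ∑ ω, w ω * f ω := by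
  simp [PMF.integral_eq_sum, PMF.ofRealWeights, ENNReal.toReal_ofReal (hw_nonneg _)]

theorem hoeffding_lemma_general {Ω : Type*} [Fintype Ω] (w : Ω → ℝ)
    (hw_nonneg : ∀ ω, 0 ≤ w ω) (hw_sum : ∑ ω, w ω = 1)
    (U : Ω → ℝ) (c : ℝ)
    (hU : ∀ ω ω', |U ω - U ω'| ≤ c) :
    ∑ ω, w ω * Real.exp (U ω - ∑ ω', w ω' * U ω') ≤ Real.exp (c ^ 2 / 8) := by
  let _ : MeasurableSpace Ω := ⊤
  have : Nonempty Ω := by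
    by_contra h
    simp [not_nonempty_iff.1 h] at hw_sum
  obtain ⟨ω₀, hω₀⟩ := Finite.exists_min U
  set μ := (PMF.ofRealWeights w hw_nonneg hw_sum).toMeasure
  have hU_Icc : ∀ ω, U ω ∈ Set.Icc (U ω₀) (U ω₀ + c) := fun ω =>
    ⟨hω₀ ω, by linarith [(le_abs_self _).trans (hU ω ω₀)]⟩
  have h := integral_exp_sub_integral_le_of_mem_Icc (μ := μ) (X := U)
    (measurable_of_countable U).aemeasurable (ae_of_all _ hU_Icc)
  simp only [μ, PMF.integral_ofRealWeights, add_sub_cancel_left] at h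
  exact h

/-- Hoeffding's lemma on a finite probability space: if any two values of a
real random variable `U` differ by at most `c`, then
`E[exp(U - E U)] ≤ exp (c²/8)`. -/
theorem hoeffding_lemma {Ω : Type*} [Fintype Ω] (w : Ω → ℝ)
    (hw_nonneg : ∀ ω, 0 ≤ w ω) (hw_sum : ∑ ω, w ω = 1)
    (U : Ω → ℝ) (c : ℝ) (hc : 0 ≤ c)
    (hU : ∀ ω ω', |U ω - U ω'| ≤ c) :
    ∑ ω, w ω * Real.exp (U ω - ∑ ω', w ω' * U ω') ≤ Real.exp (c ^ 2 / 8) :=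
  hoeffding_lemma_general w hw_nonneg hw_sum U c hU
end

section
/- For every t ≥ 0 and p ∈ [0,1], ln(1 - p + p·e^t) - p·t ≤ t²/8. -/
/-!
The function `L t = ln(1 - p + p eᵗ) - p t` vanishes together with its derivative at `0`, and
`L'' t = (1 - p) p eᵗ / (1 - p + p eᵗ)² ≤ 1/4` because `4ab ≤ (a + b)²`. Hence `t²/8 - L t` is
convex with a critical point at `0`, where it attains its minimum `0`.
-/

open Real Set

theorem le_tangent_add_sq_of_hasDerivAt_le {f f' f'' : ℝ → ℝ} {c : ℝ}
    (hf : ∀ x, HasDerivAt f (f' x) x) (hf' : ∀ x, HasDerivAt f' (f'' x) x)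
    (hf'' : ∀ x, f'' x ≤ c) (a t : ℝ) :
    f t ≤ f a + f' a * (t - a) + c * (t - a) ^ 2 / 2 := by
  set g : ℝ → ℝ := fun x => f a + f' a * (x - a) + c * (x - a) ^ 2 / 2 - f x
  have hg (x : ℝ) : HasDerivAt g (f' a + c * (x - a) - f' x) x := by
    have hlin := (hasDerivAt_id' x).sub_const a
    refine (((hlin.const_mul (f' a)).const_add (f a)).fun_add
      (((hlin.fun_pow 2).const_mul c).div_const 2)).fun_sub (hf x) |>.congr_deriv ?_
    ring
  have hg' (x : ℝ) : HasDerivAt (fun x => f' a + c * (x - a) - f' x) (c - f'' x) x := by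
    simpa using ((((hasDerivAt_id' x).sub_const a).const_mul c).const_add (f' a)).fun_sub (hf' x)
  have hconvex : ConvexOn ℝ univ g :=
    convexOn_of_hasDerivWithinAt2_nonneg convex_univ
      (fun x _ => (hg x).continuousAt.continuousWithinAt)
      (fun x _ => (hg x).hasDerivWithinAt) (fun x _ => (hg' x).hasDerivWithinAt)
      (fun x _ => sub_nonneg.mpr (hf'' x))
  have hmin : IsMinOn g univ a := by
    refine hconvex.isMinOn_of_rightDeriv_eq_zero (by simp) ?_
    rw [(hg a).hasDerivWithinAt.derivWithin (uniqueDiffWithinAt_Ioi a)]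
    ring
  have hga : g a ≤ g t := hmin (mem_univ t)
  norm_num [g] at hga
  linarith

theorem mul_div_sq_add_le_quarter (a b : ℝ) : a * b / (a + b) ^ 2 ≤ 1 / 4 := by
  rcases eq_or_ne (a + b) 0 with h | h
  · simp [h]
  · rw [div_le_iff₀ (by positivity)]
    linarith [four_mul_le_sq_add a b]

section

variable {p : ℝ}

theorem one_sub_add_mul_exp_pos (hp : p ∈ Icc 0 1) (s : ℝ) : 0 < 1 - p + p * exp s := by
  obtain ⟨hp0, hp1⟩ := hp
  rcases hp1.lt_or_eq with hp1 | rfl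
  · have := mul_nonneg hp0 (exp_pos s).le
    linarith
  · simpa using exp_pos s

theorem hasDerivAt_log_one_sub_add_mul_exp_sub_mul (hp : p ∈ Icc 0 1) (s : ℝ) :
    HasDerivAt (fun s => log (1 - p + p * exp s) - p * s)
      (p * exp s / (1 - p + p * exp s) - p) s := by
  have hD := ((hasDerivAt_exp s).const_mul p).const_add (1 - p)
  simpa using (hD.log (one_sub_add_mul_exp_pos hp s).ne').fun_sub ((hasDerivAt_id s).const_mul p)

theorem hasDerivAt_mul_exp_div_one_sub_add_mul_exp_sub (hp : p ∈ Icc 0 1) (s : ℝ) :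
    HasDerivAt (fun s => p * exp s / (1 - p + p * exp s) - p)
      ((1 - p) * (p * exp s) / (1 - p + p * exp s) ^ 2) s := by
  have hN := (hasDerivAt_exp s).const_mul p
  have hD := hN.const_add (1 - p)
  exact ((hN.fun_div hD (one_sub_add_mul_exp_pos hp s).ne').sub_const p).congr_deriv (by ring)

end

theorem log_convexity_bound_general (t p : ℝ) (hp : p ∈ Set.Icc (0 : ℝ) 1) :
    Real.log (1 - p + p * Real.exp t) - p * t ≤ t ^ 2 / 8 := by
  have := le_tangent_add_sq_of_hasDerivAt_le (hasDerivAt_log_one_sub_add_mul_exp_sub_mul hp)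
    (hasDerivAt_mul_exp_div_one_sub_add_mul_exp_sub hp)
    (fun s => mul_div_sq_add_le_quarter (1 - p) (p * exp s)) 0 t
  norm_num at this
  linarith

/-- Key analytic step in Hoeffding's lemma: for every `t ≥ 0` and `p ∈ [0,1]`,
`ln(1 - p + p·e^t) - p·t ≤ t²/8`. -/
theorem log_convexity_bound (t p : ℝ) (ht : 0 ≤ t) (hp : p ∈ Set.Icc (0 : ℝ) 1) :
    Real.log (1 - p + p * Real.exp t) - p * t ≤ t ^ 2 / 8 :=
  log_convexity_bound_general t p hp
end

section
/- Let f : X₁ × … × X_n → ℝ satisfy the bounded differences property: if x and x' coincide in all coordinates except the i-th, then |f(x) - f(x')| ≤ c_i. Then for the product measure on X₁ × … × X_n and every z ≥ 0, Pr[f - E[f] ≥ z] ≤ exp(-2z² / Σᵢ c_i²). -/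
open Finset

/-!
Doob-martingale argument: integrating out the first coordinate, the conditional mean
`g a = E[f | x₀ = a]` has oscillation at most `c 0`, so Hoeffding's lemma bounds its moment
generating function by `exp (t E g + t² c₀² / 8)`, while the fibres `f (Fin.cons a ·)` have
bounded differences `c ∘ Fin.succ`. Induction on `n` gives
`E exp (t f) ≤ exp (t E f + t² ∑ cᵢ² / 8)`, and the Chernoff bound with `t = 4 z / ∑ cᵢ²`
finishes.
-/

open Real MeasureTheory ProbabilityTheory

theorem sum_mul_exp_le_of_mem_Icc {α : Type*} [Fintype α] {p : α → ℝ} (hp : ∀ a, 0 ≤ p a)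
    (hp_sum : ∑ a, p a = 1) {φ : α → ℝ} {l u : ℝ} (hφ : ∀ a, φ a ∈ Set.Icc l u) (t : ℝ) :
    ∑ a, p a * exp (t * φ a) ≤ exp (t * ∑ a, p a * φ a + t ^ 2 * (u - l) ^ 2 / 8) := by
  let : MeasurableSpace α := ⊤
  have hp_sum' : ∑ a, ENNReal.ofReal (p a) = 1 := by
    rw [← ENNReal.ofReal_sum_of_nonneg fun a _ => hp a, hp_sum, ENNReal.ofReal_one]
  set μ := (PMF.ofFintype _ hp_sum').toMeasure
  have integral_eq (g : α → ℝ) : ∫ a, g a ∂μ = ∑ a, p a * g a := by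
    simp [μ, PMF.integral_eq_sum, ENNReal.toReal_ofReal (hp _)]
  have hoeffding := (hasSubgaussianMGF_of_mem_Icc (μ := μ) (X := φ)
    (Measurable.of_discrete).aemeasurable (ae_of_all _ hφ)).mgf_le t
  simp only [mgf, integral_eq] at hoeffding
  set m := ∑ a, p a * φ a
  calc ∑ a, p a * exp (t * φ a) = exp (t * m) * ∑ a, p a * exp (t * (φ a - m)) := by
        rw [mul_sum]
        refine sum_congr rfl fun a _ => ?_
        rw [mul_left_comm, ← exp_add]
        ring_nf
    _ ≤ exp (t * m) * exp (((‖u - l‖₊ / 2) ^ 2 : NNReal) * t ^ 2 / 2) :=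
        mul_le_mul_of_nonneg_left hoeffding (exp_pos _).le
    _ = exp (t * m + t ^ 2 * (u - l) ^ 2 / 8) := by
        rw [← exp_add]
        push_cast
        rw [Real.norm_eq_abs, div_pow, sq_abs]
        ring_nf

theorem sum_mul_exp_le_of_sub_le {α : Type*} [Fintype α] {p : α → ℝ} (hp : ∀ a, 0 ≤ p a)
    (hp_sum : ∑ a, p a = 1) {φ : α → ℝ} {c : ℝ} (hφ : ∀ a b, φ a - φ b ≤ c) (t : ℝ) :
    ∑ a, p a * exp (t * φ a) ≤ exp (t * ∑ a, p a * φ a + t ^ 2 * c ^ 2 / 8) := by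
  have hne : (univ : Finset α).Nonempty := by
    by_contra h
    simp [not_nonempty_iff_eq_empty.mp h] at hp_sum
  obtain ⟨a₀, -, hmin⟩ := exists_min_image univ φ hne
  have hφ : ∀ a, φ a ∈ Set.Icc (φ a₀) (φ a₀ + c) := fun a =>
    ⟨hmin a (mem_univ a), by linarith [hφ a a₀]⟩
  simpa using sum_mul_exp_le_of_mem_Icc hp hp_sum hφ t

section Product

variable {n : ℕ} {X : Fin n → Type*} [∀ i, Fintype (X i)]

theorem sum_prod_eq_one {p : ∀ i, X i → ℝ} (hp_sum : ∀ i, ∑ a, p i a = 1) :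
    ∑ y : ∀ i, X i, ∏ i, p i (y i) = 1 := by
  rw [← Fintype.prod_sum]
  exact prod_eq_one fun i _ => hp_sum i

theorem sum_prod_mul_eq_sum_cons {X : Fin (n + 1) → Type*} [∀ i, Fintype (X i)]
    (p : ∀ i, X i → ℝ) (g : (∀ i, X i) → ℝ) :
    ∑ y, (∏ i, p i (y i)) * g y =
      ∑ a, p 0 a * ∑ y : ∀ i, X (Fin.succ i), (∏ i, p i.succ (y i)) * g (Fin.cons a y) := by
  rw [← (Fin.consEquiv X).sum_comp, Fintype.sum_prod_type]
  simp [Fin.consEquiv, Fin.prod_univ_succ, mul_sum, mul_assoc]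

theorem sum_prod_mul_exp_le {p : ∀ i, X i → ℝ} (hp_nonneg : ∀ i a, 0 ≤ p i a)
    (hp_sum : ∀ i, ∑ a, p i a = 1) {f : (∀ i, X i) → ℝ} {c : Fin n → ℝ}
    (hf : ∀ i x a, f (Function.update x i a) - f x ≤ c i) (t : ℝ) :
    ∑ y, (∏ i, p i (y i)) * exp (t * f y) ≤
      exp (t * ∑ y, (∏ i, p i (y i)) * f y + t ^ 2 * (∑ i, c i ^ 2) / 8) := by
  induction n with
  | zero => simp
  | succ n ih =>
    set S := ∑ i : Fin n, c i.succ ^ 2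
    let g a := ∑ y : ∀ i, X (Fin.succ i), (∏ i, p i.succ (y i)) * f (Fin.cons a y)
    have hg : ∀ a b, g a - g b ≤ c 0 := fun a b => by
      calc g a - g b
          = ∑ y : ∀ i, X (Fin.succ i),
              (∏ i, p i.succ (y i)) * (f (Fin.cons a y) - f (Fin.cons b y)) := by
            simp only [g, mul_sub, sum_sub_distrib]
        _ ≤ ∑ y : ∀ i, X (Fin.succ i), (∏ i, p i.succ (y i)) * c 0 := by
            gcongr with y
            · exact prod_nonneg fun i _ => hp_nonneg _ _
            · simpa [Fin.update_cons_zero] using hf 0 (Fin.cons b y) a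
        _ = c 0 := by rw [← sum_mul, sum_prod_eq_one fun i => hp_sum i.succ, one_mul]
    have hcons :
        ∀ a i y b, f (Fin.cons a (Function.update y i b)) - f (Fin.cons a y) ≤ c i.succ :=
      fun a i y b => by simpa [Fin.cons_update] using hf i.succ (Fin.cons a y) b
    calc ∑ y, (∏ i, p i (y i)) * exp (t * f y)
        ≤ ∑ a, p 0 a * exp (t * g a + t ^ 2 * S / 8) := by
          rw [sum_prod_mul_eq_sum_cons]
          gcongr with a
          · exact hp_nonneg 0 a
          · exact ih (fun i => hp_nonneg i.succ) (fun i => hp_sum i.succ) (hcons a)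
      _ = (∑ a, p 0 a * exp (t * g a)) * exp (t ^ 2 * S / 8) := by
          simp only [exp_add, sum_mul, mul_assoc]
      _ ≤ exp (t * ∑ a, p 0 a * g a + t ^ 2 * c 0 ^ 2 / 8) * exp (t ^ 2 * S / 8) := by
          gcongr
          exact sum_mul_exp_le_of_sub_le (hp_nonneg 0) (hp_sum 0) hg t
      _ = exp (t * ∑ a, p 0 a * g a + t ^ 2 * (c 0 ^ 2 + S) / 8) := by
          rw [← exp_add]
          ring_nf
      _ = exp (t * ∑ y, (∏ i, p i (y i)) * f y + t ^ 2 * (∑ i, c i ^ 2) / 8) := by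
          rw [sum_prod_mul_eq_sum_cons, Fin.sum_univ_succ]

end Product

theorem sum_filter_le_sum_mul_exp {ι : Type*} (s : Finset ι) {w : ι → ℝ} (hw : ∀ x, 0 ≤ w x)
    (g : ι → ℝ) (z : ℝ) {t : ℝ} (ht : 0 ≤ t) :
    ∑ x ∈ s with z ≤ g x, w x ≤ ∑ x ∈ s, w x * exp (t * (g x - z)) := by
  rw [sum_filter]
  gcongr with x
  split_ifs with hx
  · exact le_mul_of_one_le_right (hw x) (one_le_exp (mul_nonneg ht (by linarith)))
  · exact mul_nonneg (hw x) (exp_pos _).le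

theorem mcdiarmid_inequality_general {n : ℕ} (X : Fin n → Type*) [∀ i, Fintype (X i)]
    (p : ∀ i, X i → ℝ) (hp_nonneg : ∀ i a, 0 ≤ p i a)
    (hp_sum : ∀ i, ∑ a, p i a = 1)
    (f : (∀ j, X j) → ℝ)
    (c : Fin n → ℝ)
    (hbdd : ∀ (i : Fin n) (x : ∀ j, X j) (a : X i),
      |f (Function.update x i a) - f x| ≤ c i)
    (z : ℝ) (hz : 0 ≤ z) :
    ∑ x ∈ univ.filter (fun x : ∀ j, X j =>
        z ≤ f x - ∑ y : ∀ j, X j, (∏ i, p i (y i)) * f y),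
      (∏ i, p i (x i)) ≤ Real.exp (-2 * z ^ 2 / ∑ i, (c i) ^ 2) := by
  set S := ∑ i, c i ^ 2
  set m := ∑ y : ∀ j, X j, (∏ i, p i (y i)) * f y
  -- the optimal Chernoff parameter; when `S = 0` both sides below degenerate to `exp 0`
  set t := 4 * z / S
  have ht : 0 ≤ t := by positivity
  have hmgf := sum_prod_mul_exp_le hp_nonneg hp_sum
    (fun i x a => (le_abs_self _).trans (hbdd i x a)) t
  calc _ ≤ ∑ x, (∏ i, p i (x i)) * exp (t * (f x - m - z)) :=
        sum_filter_le_sum_mul_exp _ (fun x => prod_nonneg fun i _ => hp_nonneg i (x i)) _ z ht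
    _ = (∑ x, (∏ i, p i (x i)) * exp (t * f x)) * exp (-(t * m) - t * z) := by
        rw [sum_mul]
        refine sum_congr rfl fun x _ => ?_
        rw [mul_assoc, ← exp_add]
        ring_nf
    _ ≤ exp (t * m + t ^ 2 * S / 8) * exp (-(t * m) - t * z) := by gcongr
    _ = exp (-2 * z ^ 2 / S) := by
        rw [← exp_add]
        rcases eq_or_ne S 0 with hS | hS
        · simp [t, hS]
        · congr 1
          simp only [t]
          field_simp
          ring

/-- McDiarmid's inequality on a product of finite probability spaces: if `f`
has the bounded differences property (changing the `i`-th coordinate changes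
`f` by at most `c i`), then `Pr[f - E f ≥ z] ≤ exp (-2 z² / ∑ c i²)`. -/
theorem mcdiarmid_inequality {n : ℕ} (X : Fin n → Type*) [∀ i, Fintype (X i)]
    [∀ i, DecidableEq (X i)]
    (p : ∀ i, X i → ℝ) (hp_nonneg : ∀ i a, 0 ≤ p i a)
    (hp_sum : ∀ i, ∑ a, p i a = 1)
    (f : (∀ j, X j) → ℝ)
    (c : Fin n → ℝ) (hc : ∀ i, 0 ≤ c i)
    (hbdd : ∀ (i : Fin n) (x : ∀ j, X j) (a : X i),
      |f (Function.update x i a) - f x| ≤ c i)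
    (z : ℝ) (hz : 0 ≤ z) :
    ∑ x ∈ univ.filter (fun x : ∀ j, X j =>
        z ≤ f x - ∑ y : ∀ j, X j, (∏ i, p i (y i)) * f y),
      (∏ i, p i (x i)) ≤ Real.exp (-2 * z ^ 2 / ∑ i, (c i) ^ 2) :=
  mcdiarmid_inequality_general X p hp_nonneg hp_sum f c hbdd z hz
end

section
/- Let μ be a product probability measure on {0,1}^n with independent coordinates, and let B ⊆ {0,1}^n satisfy μ(B) ≥ 1/n. Then there is a constant C such that for d = C·√(n·log n), the Hamming d-neighborhood B_d = {x : ∃ y ∈ B with Hamming distance ≤ d} satisfies μ(B_d) ≥ 1 - 1/n. -/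
open Finset

/-!
Blowing up via McDiarmid's inequality. The Hamming distance `f` to `B` changes by at most one
when a single coordinate changes, so by induction on the dimension (integrating out one
coordinate at a time and using `cosh t ≤ exp (t² / 2)`) its moment generating function under a
product measure is at most `exp (t² n / 2)`. By Chernoff's bound both tails of `f` around its mean
`M` beyond `√(2 n log n)` have mass at most `1 / n`. As `f = 0` on `B` and `μ B ≥ 1 / n`, the lower
tail forces `M ≤ √(2 n log n)`; the upper tail then bounds the mass outside `B_d` by `1 / n` once
`d ≥ 2 √(2 n log n)`, which holds for `d ≥ 3 √(n log n)`.
-/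

open Real Function

namespace BooleanCube

section Weights

variable {ι : Type*} [Fintype ι]

def weight (p : ι → ℝ) (x : ι → Bool) : ℝ :=
  ∏ i, if x i then p i else 1 - p i

theorem weight_nonneg {p : ι → ℝ} (hp0 : ∀ i, 0 ≤ p i) (hp1 : ∀ i, p i ≤ 1) (x : ι → Bool) :
    0 ≤ weight p x :=
  prod_nonneg fun i _ => by split <;> linarith [hp0 i, hp1 i]

variable [DecidableEq ι]

def mean (p : ι → ℝ) (f : (ι → Bool) → ℝ) : ℝ :=
  ∑ x, weight p x * f x

theorem sum_weight (p : ι → ℝ) : ∑ x, weight p x = 1 := by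
  simp [weight, ← Fintype.prod_sum (fun i (b : Bool) => if b then p i else 1 - p i)]

theorem sum_weight_le_one {p : ι → ℝ} (hp0 : ∀ i, 0 ≤ p i) (hp1 : ∀ i, p i ≤ 1)
    (s : Finset (ι → Bool)) : ∑ x ∈ s, weight p x ≤ 1 :=
  sum_weight p ▸ sum_le_sum_of_subset_of_nonneg (subset_univ s)
    fun x _ _ => weight_nonneg hp0 hp1 x

theorem sum_weight_filter_not (p : ι → ℝ) (P : (ι → Bool) → Prop) [DecidablePred P] :
    ∑ x ∈ univ.filter (fun x => ¬P x), weight p x = 1 - ∑ x ∈ univ.filter P, weight p x := by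
  rw [← sum_weight p, ← sum_filter_add_sum_filter_not univ P]
  ring

theorem mean_neg (p : ι → ℝ) (f : (ι → Bool) → ℝ) :
    mean p (fun x => -f x) = -mean p f := by
  simp [mean]

end Weights

section BoundedDifferences

variable {ι α : Type*} [DecidableEq ι]

def BoundedDifferences (f : (ι → α) → ℝ) : Prop :=
  ∀ x i c, |f (update x i c) - f x| ≤ 1

theorem BoundedDifferences.neg {f : (ι → α) → ℝ} (hf : BoundedDifferences f) :
    BoundedDifferences fun x => -f x := fun x i c => by
  simpa [abs_sub_comm, neg_add_eq_sub] using hf x i c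

end BoundedDifferences

section Hamming

variable {ι α : Type*} [Fintype ι] [DecidableEq α]

theorem inf'_hammingDist_le_add {s : Finset (ι → α)} (hs : s.Nonempty) (x y : ι → α) :
    s.inf' hs (hammingDist x) ≤ s.inf' hs (hammingDist y) + hammingDist x y := by
  obtain ⟨z, hz, hyz⟩ := exists_mem_eq_inf' hs (hammingDist y)
  rw [hyz, add_comm]
  exact (inf'_le _ hz).trans (hammingDist_triangle x y z)

variable [DecidableEq ι]

theorem hammingDist_update_le_one (x : ι → α) (i : ι) (c : α) :
    hammingDist (update x i c) x ≤ 1 := by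
  have h_eq : ∀ j, update x i c j ≠ x j → j = i := fun j h =>
    by_contra fun hji => h (update_of_ne hji c x)
  refine card_le_one.mpr fun j hj k hk => ?_
  simp only [mem_filter, mem_univ, true_and] at hj hk
  rw [h_eq j hj, h_eq k hk]

theorem boundedDifferences_inf'_hammingDist {s : Finset (ι → α)} (hs : s.Nonempty) :
    BoundedDifferences fun x => ((s.inf' hs (hammingDist x) : ℕ) : ℝ) := by
  intro x i c
  have h_upd := hammingDist_update_le_one x i c
  have h_le : s.inf' hs (hammingDist (update x i c)) ≤ s.inf' hs (hammingDist x) + 1 :=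
    (inf'_hammingDist_le_add hs (update x i c) x).trans (by omega)
  have h_ge : s.inf' hs (hammingDist x) ≤ s.inf' hs (hammingDist (update x i c)) + 1 :=
    (inf'_hammingDist_le_add hs x (update x i c)).trans (by rw [hammingDist_comm]; omega)
  dsimp only
  rw [abs_sub_le_iff, sub_le_iff_le_add', sub_le_iff_le_add']
  exact ⟨by exact_mod_cast h_le, by exact_mod_cast h_ge⟩

end Hamming

theorem two_mul_sqrt_two_mul_le (a : ℝ) : 2 * √(2 * a) ≤ 3 * √a := by
  rw [sqrt_mul zero_le_two, ← mul_assoc]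
  gcongr
  nlinarith [sq_sqrt zero_le_two, sqrt_nonneg 2]

theorem exp_mul_le_chord (t y : ℝ) (hy : |y| ≤ 1) :
    exp (t * y) ≤ (1 - y) / 2 * exp (-t) + (1 + y) / 2 * exp t := by
  rw [abs_le] at hy
  have h := convexOn_exp.2 (Set.mem_univ (-t)) (Set.mem_univ t)
    (by linarith : (0 : ℝ) ≤ (1 - y) / 2) (by linarith : (0 : ℝ) ≤ (1 + y) / 2) (by ring)
  rw [show t * y = (1 - y) / 2 * -t + (1 + y) / 2 * t by ring]
  simpa only [smul_eq_mul] using h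

/-- Hoeffding's lemma for a two-valued variable, with the weaker constant `1 / 2` in place of
`1 / 8`. -/
theorem two_point_mgf_le {q a b : ℝ} (hq0 : 0 ≤ q) (hq1 : q ≤ 1) (hab : |b - a| ≤ 1) (t : ℝ) :
    q * exp (t * (b - (q * b + (1 - q) * a))) + (1 - q) * exp (t * (a - (q * b + (1 - q) * a)))
      ≤ exp (t ^ 2 / 2) := by
  rw [abs_le] at hab
  have hb : |b - (q * b + (1 - q) * a)| ≤ 1 := abs_le.mpr ⟨by nlinarith, by nlinarith⟩
  have ha : |a - (q * b + (1 - q) * a)| ≤ 1 := abs_le.mpr ⟨by nlinarith, by nlinarith⟩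
  calc _ ≤ q * ((1 - (b - (q * b + (1 - q) * a))) / 2 * exp (-t)
            + (1 + (b - (q * b + (1 - q) * a))) / 2 * exp t)
          + (1 - q) * ((1 - (a - (q * b + (1 - q) * a))) / 2 * exp (-t)
            + (1 + (a - (q * b + (1 - q) * a))) / 2 * exp t) := by
        have h1q : 0 ≤ 1 - q := by linarith
        exact add_le_add (mul_le_mul_of_nonneg_left (exp_mul_le_chord t _ hb) hq0)
          (mul_le_mul_of_nonneg_left (exp_mul_le_chord t _ ha) h1q)
    _ = cosh t := by rw [cosh_eq]; ring
    _ ≤ exp (t ^ 2 / 2) := cosh_le_exp_half_sq t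

section HeadCoordinate

variable {n : ℕ}

def avgHead (p : Fin (n + 1) → ℝ) (F : (Fin (n + 1) → Bool) → ℝ) (y : Fin n → Bool) : ℝ :=
  p 0 * F (Fin.cons true y) + (1 - p 0) * F (Fin.cons false y)

theorem weight_cons (p : Fin (n + 1) → ℝ) (b : Bool) (y : Fin n → Bool) :
    weight p (Fin.cons b y) = (if b then p 0 else 1 - p 0) * weight (Fin.tail p) y := by
  simp [weight, Fin.prod_univ_succ, Fin.tail]

theorem sum_weight_mul_eq_sum_avgHead (p : Fin (n + 1) → ℝ) (F : (Fin (n + 1) → Bool) → ℝ) :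
    ∑ x, weight p x * F x = ∑ y, weight (Fin.tail p) y * avgHead p F y := by
  rw [← (Fin.consEquiv fun _ => Bool).sum_comp, Fintype.sum_prod_type, Fintype.sum_bool,
    ← sum_add_distrib]
  refine sum_congr rfl fun y _ => ?_
  change weight p (Fin.cons true y) * F (Fin.cons true y)
    + weight p (Fin.cons false y) * F (Fin.cons false y) = _
  simp only [weight_cons, avgHead, if_true, Bool.false_eq_true, if_false]
  ring

theorem mean_avgHead (p : Fin (n + 1) → ℝ) (f : (Fin (n + 1) → Bool) → ℝ) :
    mean (Fin.tail p) (avgHead p f) = mean p f :=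
  (sum_weight_mul_eq_sum_avgHead p f).symm

theorem BoundedDifferences.avgHead {p : Fin (n + 1) → ℝ} (hp0 : 0 ≤ p 0) (hp1 : p 0 ≤ 1)
    {f : (Fin (n + 1) → Bool) → ℝ} (hf : BoundedDifferences f) :
    BoundedDifferences (avgHead p f) := by
  intro y i c
  have h_true := hf (Fin.cons true y) i.succ c
  have h_false := hf (Fin.cons false y) i.succ c
  rw [← Fin.cons_update] at h_true h_false
  simp only [BooleanCube.avgHead]
  rw [abs_le] at h_true h_false ⊢
  constructor <;> nlinarith [h_true.1, h_true.2, h_false.1, h_false.2]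

theorem avgHead_exp_le {p : Fin (n + 1) → ℝ} (hp0 : 0 ≤ p 0) (hp1 : p 0 ≤ 1)
    {f : (Fin (n + 1) → Bool) → ℝ} (hf : BoundedDifferences f) (t c : ℝ) (y : Fin n → Bool) :
    avgHead p (fun x => exp (t * (f x - c))) y
      ≤ exp (t * (avgHead p f y - c)) * exp (t ^ 2 / 2) := by
  have h_gap : |f (Fin.cons true y) - f (Fin.cons false y)| ≤ 1 := by
    have h := hf (Fin.cons false y) 0 true
    rwa [Fin.update_cons_zero] at h
  have h := mul_le_mul_of_nonneg_left (two_point_mgf_le hp0 hp1 h_gap t)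
    (exp_pos (t * (avgHead p f y - c))).le
  refine le_of_eq_of_le ?_ h
  rw [mul_add, mul_left_comm, mul_left_comm (exp _), ← exp_add, ← exp_add]
  simp only [BooleanCube.avgHead]
  ring_nf

theorem sum_weight_mul_exp_le {p : Fin n → ℝ} (hp0 : ∀ i, 0 ≤ p i) (hp1 : ∀ i, p i ≤ 1)
    {f : (Fin n → Bool) → ℝ} (hf : BoundedDifferences f) (t : ℝ) :
    ∑ x, weight p x * exp (t * (f x - mean p f)) ≤ exp (t ^ 2 * n / 2) := by
  induction n with
  | zero => simp [weight, mean]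
  | succ n ih =>
    have htail0 : ∀ i, 0 ≤ Fin.tail p i := fun i => hp0 i.succ
    have htail1 : ∀ i, Fin.tail p i ≤ 1 := fun i => hp1 i.succ
    have ih' := ih htail0 htail1 (hf.avgHead (hp0 0) (hp1 0))
    rw [mean_avgHead] at ih'
    calc ∑ x, weight p x * exp (t * (f x - mean p f))
        = ∑ y, weight (Fin.tail p) y * avgHead p (fun x => exp (t * (f x - mean p f))) y :=
          sum_weight_mul_eq_sum_avgHead p _
      _ ≤ ∑ y, weight (Fin.tail p) y * (exp (t * (avgHead p f y - mean p f)) * exp (t ^ 2 / 2)) :=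
          sum_le_sum fun y _ => mul_le_mul_of_nonneg_left
            (avgHead_exp_le (hp0 0) (hp1 0) hf t _ y)
            (weight_nonneg htail0 htail1 y)
      _ = (∑ y, weight (Fin.tail p) y * exp (t * (avgHead p f y - mean p f))) * exp (t ^ 2 / 2) := by
          simp only [sum_mul, mul_assoc]
      _ ≤ exp (t ^ 2 * n / 2) * exp (t ^ 2 / 2) := by gcongr
      _ = exp (t ^ 2 * (n + 1 : ℕ) / 2) := by rw [← exp_add]; push_cast; ring_nf

end HeadCoordinate

section Tails

variable {n : ℕ} {p : Fin n → ℝ} {f : (Fin n → Bool) → ℝ}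

theorem sum_weight_le_exp_neg_sq (hp0 : ∀ i, 0 ≤ p i) (hp1 : ∀ i, p i ≤ 1)
    (hf : BoundedDifferences f) {s : ℝ} (hs : 0 ≤ s) :
    ∑ x ∈ univ.filter (fun x => mean p f + s ≤ f x), weight p x ≤ exp (-s ^ 2 / (2 * n)) := by
  set t := s / n
  have ht : 0 ≤ t := by positivity
  have h_exponent : t ^ 2 * n / 2 + -(t * s) = -s ^ 2 / (2 * n) := by
    rcases eq_or_ne (n : ℝ) 0 with hn | hn
    · simp [t, hn]
    · simp only [t]
      field_simp
      ring
  calc ∑ x ∈ univ.filter (fun x => mean p f + s ≤ f x), weight p x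
      ≤ ∑ x ∈ univ.filter (fun x => mean p f + s ≤ f x),
          weight p x * exp (t * (f x - mean p f) + -(t * s)) := by
        refine sum_le_sum fun x hx => le_mul_of_one_le_right (weight_nonneg hp0 hp1 x) ?_
        have hx : mean p f + s ≤ f x := (mem_filter.mp hx).2
        exact one_le_exp (by nlinarith)
    _ ≤ ∑ x, weight p x * exp (t * (f x - mean p f) + -(t * s)) :=
        sum_le_sum_of_subset_of_nonneg (filter_subset _ _) fun x _ _ =>
          mul_nonneg (weight_nonneg hp0 hp1 x) (exp_pos _).le
    _ = (∑ x, weight p x * exp (t * (f x - mean p f))) * exp (-(t * s)) := by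
        simp only [exp_add, sum_mul, mul_assoc]
    _ ≤ exp (t ^ 2 * n / 2) * exp (-(t * s)) := by
        gcongr
        exact sum_weight_mul_exp_le hp0 hp1 hf t
    _ = exp (-s ^ 2 / (2 * n)) := by rw [← exp_add, h_exponent]

theorem exp_neg_sqrt_sq_div {n : ℕ} (hn : n ≠ 0) {ε : ℝ} (hε : 0 < ε) (hε1 : ε ≤ 1) :
    exp (-√(2 * n * log ε⁻¹) ^ 2 / (2 * n)) = ε := by
  have hlog : 0 ≤ log ε⁻¹ := log_nonneg (one_le_inv₀ hε |>.mpr hε1)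
  rw [sq_sqrt (by positivity), log_inv]
  field_simp
  exact exp_log hε

theorem sum_weight_le_of_sqrt_le (hn : n ≠ 0) (hp0 : ∀ i, 0 ≤ p i) (hp1 : ∀ i, p i ≤ 1)
    (hf : BoundedDifferences f) {ε : ℝ} (hε : 0 < ε) (hε1 : ε ≤ 1) :
    ∑ x ∈ univ.filter (fun x => mean p f + √(2 * n * log ε⁻¹) ≤ f x), weight p x ≤ ε :=
  (sum_weight_le_exp_neg_sq hp0 hp1 hf (sqrt_nonneg _)).trans_eq (exp_neg_sqrt_sq_div hn hε hε1)

theorem mean_le_sqrt_of_le_sum_weight (hn : n ≠ 0) (hp0 : ∀ i, 0 ≤ p i) (hp1 : ∀ i, p i ≤ 1)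
    (hf : BoundedDifferences f) {B : Finset (Fin n → Bool)} {ε : ℝ} (hε : 0 < ε)
    (hB : ε ≤ ∑ x ∈ B, weight p x) (hfB : ∀ x ∈ B, f x ≤ 0) :
    mean p f ≤ √(2 * n * log ε⁻¹) := by
  by_contra! h_lt
  have hM : 0 < mean p f := (sqrt_nonneg _).trans_lt h_lt
  have hε1 : ε ≤ 1 := hB.trans (sum_weight_le_one hp0 hp1 B)
  have h_sub : B ⊆ univ.filter (fun x => mean p (fun x => -f x) + mean p f ≤ -f x) :=
    fun x hx => mem_filter.mpr ⟨mem_univ x, by rw [mean_neg]; linarith [hfB x hx]⟩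
  have h_tail := (sum_le_sum_of_subset_of_nonneg h_sub fun x _ _ => weight_nonneg hp0 hp1 x).trans
    (sum_weight_le_exp_neg_sq hp0 hp1 hf.neg hM.le)
  have h_exp : exp (-mean p f ^ 2 / (2 * n)) < ε := by
    rw [← exp_neg_sqrt_sq_div hn hε hε1]
    gcongr
  linarith

end Tails

end BooleanCube

open BooleanCube in
/-- Asymmetric blowing-up lemma: there is a constant `C` such that for every
product probability measure on `{0,1}^n` (n ≥ 2) and every `B` with
`μ B ≥ 1/n`, the Hamming `d`-neighborhood of `B` with `d = C·√(n·log n)` has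
measure at least `1 - 1/n`. -/
theorem blowing_up_asymmetric :
    ∃ C : ℝ, 0 < C ∧ ∀ (n : ℕ), 2 ≤ n →
      ∀ p : Fin n → ℝ, (∀ i, 0 ≤ p i) → (∀ i, p i ≤ 1) →
      ∀ B : Finset (Fin n → Bool),
      (1 / n : ℝ) ≤ ∑ x ∈ B, ∏ i, (if x i then p i else 1 - p i) →
      ∀ d : ℕ, d = ⌈C * Real.sqrt (n * Real.log n)⌉₊ →
      (1 - 1 / n : ℝ) ≤
        ∑ x ∈ univ.filter (fun x : Fin n → Bool =>
            ∃ y ∈ B, (univ.filter (fun i => x i ≠ y i)).card ≤ d),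
          ∏ i, (if x i then p i else 1 - p i) := by
  refine ⟨3, by norm_num, fun n hn p hp0 hp1 B hB d hd => ?_⟩
  change 1 / (n : ℝ) ≤ ∑ x ∈ B, weight p x at hB
  change _ ≤ ∑ x ∈ univ.filter (fun x => ∃ y ∈ B, hammingDist x y ≤ d), weight p x
  have hn0 : n ≠ 0 := by omega
  have hε : (0 : ℝ) < 1 / n := by positivity
  have hε1 : 1 / (n : ℝ) ≤ 1 := div_le_one_of_le₀ (by exact_mod_cast hn0.bot_lt) (by positivity)
  have hBne : B.Nonempty := nonempty_of_sum_ne_zero (hε.trans_le hB).ne'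
  set f : (Fin n → Bool) → ℝ := fun x => (B.inf' hBne (hammingDist x) : ℕ)
  have hf : BoundedDifferences f := boundedDifferences_inf'_hammingDist hBne
  have h_mean : mean p f ≤ √(2 * n * log n) := by
    simpa only [one_div, inv_inv] using mean_le_sqrt_of_le_sum_weight hn0 hp0 hp1 hf hε hB
      fun x hx => by simpa [f] using hx
  have h_tail : ∑ x ∈ univ.filter (fun x => mean p f + √(2 * n * log n) ≤ f x), weight p x
      ≤ 1 / n := by
    simpa only [one_div, inv_inv] using sum_weight_le_of_sqrt_le hn0 hp0 hp1 hf hε hε1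
  have h_ceil : 3 * √(n * log n) ≤ d := hd ▸ Nat.le_ceil _
  have h_sqrt := two_mul_sqrt_two_mul_le (n * log n)
  rw [← mul_assoc] at h_sqrt
  have h_far : univ.filter (fun x => ¬∃ y ∈ B, hammingDist x y ≤ d)
      ⊆ univ.filter (fun x => mean p f + √(2 * n * log n) ≤ f x) := by
    intro x
    simp only [mem_filter, mem_univ, true_and, not_exists, not_and, not_le]
    intro hx
    have h_dist : (d : ℝ) ≤ f x := Nat.cast_le.mpr <| le_inf' hBne _ fun y hy => (hx y hy).le
    linarith
  have h_compl := (sum_le_sum_of_subset_of_nonneg h_far fun x _ _ =>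
    weight_nonneg hp0 hp1 x).trans h_tail
  rw [sum_weight_filter_not] at h_compl
  linarith
end

section
/- Let f : X₁ × … × X_n → ℝ be 1-Lipschitz with respect to each coordinate (changing one coordinate changes f by at most 1), let μ be a product measure, and let B ⊆ X with μ(B) > 0 be a set where f = 0. Then E_μ[f] ≤ √((n/2)·ln(1/μ(B))). -/
/-!
Write `m` for the mean of `f`. Revealing one coordinate at a time, the conditional means form a
martingale whose increments lie in intervals of length one, so Hoeffding's lemma and induction on
`n` give the McDiarmid bound `E exp (t (m - f)) ≤ exp (n t² / 8)`. Since `f = 0` on `B`, the left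
side is at least `μ(B) exp (t m)`; taking logarithms and optimizing over `t` yields
`m² ≤ (n / 2) log (1 / μ(B))`.
-/

open Finset Real ProbabilityTheory MeasureTheory

section WeightedSum

variable {α : Type*} [Fintype α] {q : α → ℝ}

theorem sum_mul_exp_sub_le_of_mem_Icc (hq0 : ∀ a, 0 ≤ q a) (hq1 : ∑ a, q a = 1)
    {v : α → ℝ} {lo hi : ℝ} (hv : ∀ a, v a ∈ Set.Icc lo hi) (t : ℝ) :
    ∑ a, q a * exp (t * (v a - ∑ b, q b * v b)) ≤ exp ((hi - lo) ^ 2 * t ^ 2 / 8) := by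
  -- Hoeffding's lemma for the law on `α` with weights `q`
  let : MeasurableSpace α := ⊤
  have hsum : ∑ a, ENNReal.ofReal (q a) = 1 := by
    rw [← ENNReal.ofReal_sum_of_nonneg fun a _ ↦ hq0 a, hq1, ENNReal.ofReal_one]
  set μ := (PMF.ofFintype _ hsum).toMeasure
  have integral_eq : ∀ g : α → ℝ, ∫ a, g a ∂μ = ∑ a, q a * g a := fun g ↦ by
    simp [μ, PMF.integral_eq_sum, hq0]
  have hoeffding := (hasSubgaussianMGF_of_mem_Icc (μ := μ) .of_discrete (.of_forall hv)).mgf_le t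
  rw [mgf, integral_eq, integral_eq] at hoeffding
  convert hoeffding using 2
  simp only [NNReal.coe_pow, NNReal.coe_div, NNReal.coe_ofNat, coe_nnnorm, Real.norm_eq_abs,
    div_pow, sq_abs]
  ring

theorem exists_forall_mem_Icc_of_abs_sub_le [Nonempty α] {v : α → ℝ} {c : ℝ}
    (hv : ∀ a b, |v a - v b| ≤ c) : ∃ lo, ∀ a, v a ∈ Set.Icc lo (lo + c) := by
  obtain ⟨a₀, ha₀⟩ := Finite.exists_min v
  exact ⟨v a₀, fun a ↦ ⟨ha₀ a, by linarith [le_of_abs_le (hv a a₀)]⟩⟩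

theorem sum_mul_exp_sub_le_of_abs_sub_le (hq0 : ∀ a, 0 ≤ q a) (hq1 : ∑ a, q a = 1)
    {v : α → ℝ} {c : ℝ} (hv : ∀ a b, |v a - v b| ≤ c) (t : ℝ) :
    ∑ a, q a * exp (t * (v a - ∑ b, q b * v b)) ≤ exp (c ^ 2 * t ^ 2 / 8) := by
  have : Nonempty α := univ_nonempty_iff.mp (nonempty_of_sum_ne_zero (f := q) (by simp [hq1]))
  obtain ⟨lo, hlo⟩ := exists_forall_mem_Icc_of_abs_sub_le hv
  simpa using sum_mul_exp_sub_le_of_mem_Icc hq0 hq1 hlo t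

theorem abs_sum_mul_sub_sum_mul_le (hq0 : ∀ a, 0 ≤ q a) (hq1 : ∑ a, q a = 1)
    {F G : α → ℝ} {c : ℝ} (h : ∀ a, |F a - G a| ≤ c) :
    |∑ a, q a * F a - ∑ a, q a * G a| ≤ c :=
  calc |∑ a, q a * F a - ∑ a, q a * G a|
      = |∑ a, q a * (F a - G a)| := by simp only [mul_sub, sum_sub_distrib]
    _ ≤ ∑ a, q a * |F a - G a| := by
        refine (abs_sum_le_sum_abs _ _).trans_eq (sum_congr rfl fun a _ ↦ ?_)
        rw [abs_mul, abs_of_nonneg (hq0 a)]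
    _ ≤ ∑ a, q a * c := by gcongr with a; exacts [hq0 a, h a]
    _ = c := by rw [← sum_mul, hq1, one_mul]

end WeightedSum

theorem sum_prod_mul_fin_succ {n : ℕ} {X : Fin (n + 1) → Type*} [∀ i, Fintype (X i)]
    (p : ∀ i, X i → ℝ) (F : (∀ j, X j) → ℝ) :
    ∑ x : ∀ j, X j, (∏ i, p i (x i)) * F x =
      ∑ a, p 0 a * ∑ y : ∀ j : Fin n, X j.succ,
        (∏ i, p i.succ (y i)) * F (Fin.cons a y) := by
  rw [← (Fin.consEquiv X).sum_comp, Fintype.sum_prod_type]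
  refine sum_congr rfl fun a _ ↦ ?_
  rw [mul_sum]
  refine sum_congr rfl fun y _ ↦ ?_
  simp [Fin.consEquiv, Fin.prod_univ_succ, mul_assoc]

theorem sum_prod_mul_exp_sub_le {n : ℕ} (X : Fin n → Type*) [∀ i, Fintype (X i)]
    [∀ i, DecidableEq (X i)] (p : ∀ i, X i → ℝ) (hp0 : ∀ i a, 0 ≤ p i a)
    (hp1 : ∀ i, ∑ a, p i a = 1) (c : Fin n → ℝ) (f : (∀ j, X j) → ℝ)
    (hf : ∀ i x a, |f (Function.update x i a) - f x| ≤ c i) (t : ℝ) :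
    ∑ x, (∏ i, p i (x i)) * exp (t * (f x - ∑ y, (∏ i, p i (y i)) * f y)) ≤
      exp ((∑ i, c i ^ 2) * t ^ 2 / 8) := by
  induction n with
  | zero => simp
  | succ n ih =>
    set g : (∀ j : Fin n, X j.succ) → ℝ := fun y ↦ ∑ a, p 0 a * f (Fin.cons a y)
    set w : (∀ j : Fin n, X j.succ) → ℝ := fun y ↦ ∏ i, p i.succ (y i)
    have hw : ∀ y, 0 ≤ w y := fun y ↦ prod_nonneg fun i _ ↦ hp0 i.succ (y i)
    have mean_eq : ∑ x, (∏ i, p i (x i)) * f x = ∑ y, w y * g y := by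
      simp only [sum_prod_mul_fin_succ, g, mul_sum, w]
      rw [sum_comm]
      exact sum_congr rfl fun y _ ↦ sum_congr rfl fun a _ ↦ by ring
    have hg : ∀ i y b, |g (Function.update y i b) - g y| ≤ c i.succ := fun i y b ↦
      abs_sum_mul_sub_sum_mul_le (hp0 0) (hp1 0) fun a ↦ by
        simpa [Fin.cons_update] using hf i.succ (Fin.cons a y) b
    have fiber : ∀ y,
        ∑ a, p 0 a * exp (t * (f (Fin.cons a y) - g y)) ≤ exp (c 0 ^ 2 * t ^ 2 / 8) :=
      fun y ↦ sum_mul_exp_sub_le_of_abs_sub_le (hp0 0) (hp1 0) (fun a b ↦ by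
        simpa using hf 0 (Fin.cons b y) a) t
    set m := ∑ y, w y * g y
    calc ∑ x, (∏ i, p i (x i)) * exp (t * (f x - ∑ y, (∏ i, p i (y i)) * f y))
        = ∑ y, w y * exp (t * (g y - m)) *
            ∑ a, p 0 a * exp (t * (f (Fin.cons a y) - g y)) := by
          rw [mean_eq, sum_prod_mul_fin_succ]
          simp only [mul_sum, w]
          rw [sum_comm]
          refine sum_congr rfl fun y _ ↦ sum_congr rfl fun a _ ↦ ?_
          rw [show t * (f (Fin.cons a y) - m) =
              t * (g y - m) + t * (f (Fin.cons a y) - g y) by ring, exp_add]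
          ring
      _ ≤ ∑ y, w y * exp (t * (g y - m)) * exp (c 0 ^ 2 * t ^ 2 / 8) := by
          gcongr with y
          · exact mul_nonneg (hw y) (exp_pos _).le
          · exact fiber y
      _ ≤ exp ((∑ i : Fin n, c i.succ ^ 2) * t ^ 2 / 8) * exp (c 0 ^ 2 * t ^ 2 / 8) := by
          rw [← sum_mul]
          gcongr
          exact ih (fun i ↦ X i.succ) (fun i ↦ p i.succ) (fun i ↦ hp0 i.succ)
            (fun i ↦ hp1 i.succ) (fun i ↦ c i.succ) g hg
      _ = exp ((∑ i, c i ^ 2) * t ^ 2 / 8) := by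
          rw [← exp_add, Fin.sum_univ_succ]
          ring_nf

theorem le_sqrt_of_forall_mul_le_sq_add {m s L : ℝ} (hs : 0 ≤ s)
    (h : ∀ t, t * m ≤ s * t ^ 2 / 8 + L) : m ≤ √(s / 2 * L) := by
  rcases le_or_gt m 0 with hm | hm
  · exact hm.trans (sqrt_nonneg _)
  rcases hs.eq_or_lt with rfl | hs
  · have := h ((L + 1) / m)
    rw [div_mul_cancel₀ _ hm.ne'] at this
    linarith
  · -- `t = 4m/s` minimizes `s t² / 8 - t m`
    have := h (4 * m / s)
    refine le_sqrt_of_sq_le ?_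
    field_simp at this ⊢
    nlinarith

/-- Application of McDiarmid's inequality: if `f` is 1-Lipschitz in each
coordinate with respect to a product measure and vanishes on a set `B` of
positive measure, then `E f ≤ √((n/2)·ln(1/μ B))`. -/
theorem expectation_le_of_vanishing_on_set {n : ℕ} (X : Fin n → Type*)
    [∀ i, Fintype (X i)] [∀ i, DecidableEq (X i)]
    (p : ∀ i, X i → ℝ) (hp_nonneg : ∀ i a, 0 ≤ p i a)
    (hp_sum : ∀ i, ∑ a, p i a = 1)
    (f : (∀ j, X j) → ℝ)
    (hlip : ∀ (i : Fin n) (x : ∀ j, X j) (a : X i),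
      |f (Function.update x i a) - f x| ≤ 1)
    (B : Finset (∀ j, X j)) (hf0 : ∀ x ∈ B, f x = 0)
    (μB : ℝ) (hμB : μB = ∑ x ∈ B, ∏ i, p i (x i)) (hμBpos : 0 < μB) :
    ∑ x : ∀ j, X j, (∏ i, p i (x i)) * f x ≤
      Real.sqrt ((n / 2) * Real.log (1 / μB)) := by
  set m := ∑ x : ∀ j, X j, (∏ i, p i (x i)) * f x
  have hw : ∀ x : ∀ j, X j, 0 ≤ ∏ i, p i (x i) := fun x ↦
    prod_nonneg fun i _ ↦ hp_nonneg i (x i)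
  have measure_mul_exp_le : ∀ t, μB * exp (t * m) ≤ exp (n * t ^ 2 / 8) := fun t ↦
    calc μB * exp (t * m) = ∑ x ∈ B, (∏ i, p i (x i)) * exp (-t * (f x - m)) := by
          rw [hμB, sum_mul]
          exact sum_congr rfl fun x hx ↦ by rw [hf0 x hx]; ring_nf
      _ ≤ ∑ x, (∏ i, p i (x i)) * exp (-t * (f x - m)) :=
          sum_le_sum_of_subset_of_nonneg (subset_univ B) fun x _ _ ↦
            mul_nonneg (hw x) (exp_pos _).le
      _ ≤ exp (n * t ^ 2 / 8) := by
          simpa [m] using sum_prod_mul_exp_sub_le X p hp_nonneg hp_sum 1 f hlip (-t)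
  refine le_sqrt_of_forall_mul_le_sq_add (Nat.cast_nonneg n) fun t ↦ ?_
  have := log_le_log (by positivity) (measure_mul_exp_le t)
  rw [log_mul hμBpos.ne' (exp_pos _).ne', log_exp, log_exp] at this
  rw [one_div, log_inv]
  linarith
end

section
/- For fixed τ ∈ (0, 1/2), define N(p,τ) = p + τ - 2pτ. The function p ↦ H(N(p,τ)) ∘ (H restricted to [0,1/2])⁻¹, i.e., the curve {(H(p), H(N(p,τ))) : p ∈ [0,1/2]}, is convex: the map g : [0,1] → [0,1] with g(H(p)) = H(N(p,τ)) is a convex function of its argument. -/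
/-- Binary entropy function (base 2). -/
noncomputable def binEnt (p : ℝ) : ℝ :=
  -(p * Real.logb 2 p) - (1 - p) * Real.logb 2 (1 - p)

/-- The parameter of a Bernoulli bit after passing through a binary symmetric
channel with crossover probability `τ`. -/
def noiseParam (p τ : ℝ) : ℝ := p + τ - 2 * p * τ

/-!
Parametrize the curve by `p`: it is `(E p, F p)` with `E = H` and `F = H ∘ N(·, τ)`, and `E` is
strictly increasing. By Cauchy's mean value theorem such a curve is the graph of a convex function
as soon as `F' / E'` is nondecreasing. Here `F' / E' = (1 - 2τ) L(N(p, τ)) / L(p)` with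
`L x = log (1 - x) - log x`, and its derivative is nonnegative iff
`(1 - 2τ) φ(p) ≤ φ(N(p, τ))` for `φ x = x (1 - x) L(x)`. Since `N(p, τ) = (1 - 2τ) p + 2τ · 1/2`,
this is concavity of `φ` on `(0, 1/2]` together with `φ(1/2) = 0`.
-/

open Real Set

section ParametricCurve

variable {E F E' F' : ℝ → ℝ}

theorem strictMonoOn_Icc_of_hasDerivAt_pos {a b : ℝ} (hE : ContinuousOn E (Icc a b))
    (hE' : ∀ x ∈ Ioo a b, HasDerivAt E (E' x) x) (hE'_pos : ∀ x ∈ Ioo a b, 0 < E' x) :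
    StrictMonoOn E (Icc a b) :=
  strictMonoOn_of_hasDerivWithinAt_pos (convex_Icc a b) hE
    (by simpa only [interior_Icc] using fun x hx => (hE' x hx).hasDerivWithinAt)
    (by simpa only [interior_Icc] using hE'_pos)

theorem slope_le_slope_of_monotoneOn_deriv_div {u v w : ℝ} (huv : u < v) (hvw : v < w)
    (hE : ContinuousOn E (Icc u w)) (hF : ContinuousOn F (Icc u w))
    (hE' : ∀ x ∈ Ioo u w, HasDerivAt E (E' x) x) (hF' : ∀ x ∈ Ioo u w, HasDerivAt F (F' x) x)
    (hE'_pos : ∀ x ∈ Ioo u w, 0 < E' x)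
    (hmono : MonotoneOn (fun x => F' x / E' x) (Ioo u w)) :
    (F v - F u) / (E v - E u) ≤ (F w - F v) / (E w - E v) := by
  have hEmono := strictMonoOn_Icc_of_hasDerivAt_pos hE hE' hE'_pos
  have hu : u ∈ Icc u w := left_mem_Icc.2 (huv.trans hvw).le
  have hv : v ∈ Icc u w := ⟨huv.le, hvw.le⟩
  have hw : w ∈ Icc u w := right_mem_Icc.2 (huv.trans hvw).le
  have hleft : Ioo u v ⊆ Ioo u w := Ioo_subset_Ioo_right hvw.le
  have hright : Ioo v w ⊆ Ioo u w := Ioo_subset_Ioo_left huv.le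
  obtain ⟨ξ, hξ, hξ_eq⟩ := exists_ratio_hasDerivAt_eq_ratio_slope E E' huv
    (hE.mono (Icc_subset_Icc_right hvw.le)) (fun x hx => hE' x (hleft hx))
    F F' (hF.mono (Icc_subset_Icc_right hvw.le)) (fun x hx => hF' x (hleft hx))
  obtain ⟨η, hη, hη_eq⟩ := exists_ratio_hasDerivAt_eq_ratio_slope E E' hvw
    (hE.mono (Icc_subset_Icc_left huv.le)) (fun x hx => hE' x (hright hx))
    F F' (hF.mono (Icc_subset_Icc_left huv.le)) (fun x hx => hF' x (hright hx))
  calc (F v - F u) / (E v - E u) = F' ξ / E' ξ := by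
        rw [div_eq_div_iff (sub_pos.2 (hEmono hu hv huv)).ne' (hE'_pos ξ (hleft hξ)).ne']
        linarith
    _ ≤ F' η / E' η := hmono (hleft hξ) (hright hη) (hξ.2.trans hη.1).le
    _ = (F w - F v) / (E w - E v) := by
        rw [div_eq_div_iff (hE'_pos η (hright hη)).ne' (sub_pos.2 (hEmono hv hw hvw)).ne']
        linarith

theorem convexOn_image_comp_invFunOn_of_monotoneOn_deriv_div {a b : ℝ}
    (hE : ContinuousOn E (Icc a b)) (hF : ContinuousOn F (Icc a b))
    (hE' : ∀ x ∈ Ioo a b, HasDerivAt E (E' x) x) (hF' : ∀ x ∈ Ioo a b, HasDerivAt F (F' x) x)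
    (hE'_pos : ∀ x ∈ Ioo a b, 0 < E' x)
    (hmono : MonotoneOn (fun x => F' x / E' x) (Ioo a b)) :
    ConvexOn ℝ (E '' Icc a b) (F ∘ Function.invFunOn E (Icc a b)) := by
  have hEmono := strictMonoOn_Icc_of_hasDerivAt_pos hE hE' hE'_pos
  have hconv : Convex ℝ (E '' Icc a b) := (isPreconnected_Icc.image E hE).convex
  have hinv : LeftInvOn (Function.invFunOn E (Icc a b)) E (Icc a b) :=
    hEmono.injOn.leftInvOn_invFunOn
  refine convexOn_of_slope_mono_adjacent hconv ?_
  rintro _ y _ ⟨u, hu, rfl⟩ ⟨w, hw, rfl⟩ huy hyw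
  obtain ⟨v, hv, rfl⟩ := hconv.ordConnected.out (mem_image_of_mem E hu)
    (mem_image_of_mem E hw) ⟨huy.le, hyw.le⟩
  have hsub : Icc u w ⊆ Icc a b := Icc_subset_Icc hu.1 hw.2
  have hsub' : Ioo u w ⊆ Ioo a b := Ioo_subset_Ioo hu.1 hw.2
  simp only [Function.comp_apply, hinv hu, hinv hv, hinv hw]
  exact slope_le_slope_of_monotoneOn_deriv_div ((hEmono.lt_iff_lt hu hv).1 huy)
    ((hEmono.lt_iff_lt hv hw).1 hyw) (hE.mono hsub) (hF.mono hsub)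
    (fun x hx => hE' x (hsub' hx)) (fun x hx => hF' x (hsub' hx))
    (fun x hx => hE'_pos x (hsub' hx)) (hmono.mono hsub')

end ParametricCurve

noncomputable def binEntropyDeriv (x : ℝ) : ℝ := log (1 - x) - log x

theorem binEntropyDeriv_nonneg {x : ℝ} (hx₀ : 0 < x) (hx₁ : x ≤ 1 / 2) :
    0 ≤ binEntropyDeriv x :=
  sub_nonneg.2 (log_le_log hx₀ (by linarith))

theorem binEntropyDeriv_pos {x : ℝ} (hx₀ : 0 < x) (hx₁ : x < 1 / 2) :
    0 < binEntropyDeriv x :=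
  sub_pos.2 (log_lt_log hx₀ (by linarith))

theorem hasDerivAt_binEntropyDeriv {x : ℝ} (hx₀ : 0 < x) (hx₁ : x < 1) :
    HasDerivAt binEntropyDeriv (-(x * (1 - x))⁻¹) x := by
  have hx : 0 < 1 - x := sub_pos.2 hx₁
  refine (((hasDerivAt_id' x).const_sub 1).log hx.ne').sub (hasDerivAt_log hx₀.ne')
    |>.congr_deriv ?_
  field_simp
  ring

theorem hasDerivAt_mul_one_sub_mul_binEntropyDeriv {x : ℝ} (hx₀ : 0 < x) (hx₁ : x < 1) :
    HasDerivAt (fun x => x * (1 - x) * binEntropyDeriv x)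
      ((1 - 2 * x) * binEntropyDeriv x - 1) x := by
  refine (((hasDerivAt_id' x).mul ((hasDerivAt_id' x).const_sub 1)).mul
    (hasDerivAt_binEntropyDeriv hx₀ hx₁)).congr_deriv ?_
  have hx : 1 - x ≠ 0 := (sub_pos.2 hx₁).ne'
  simp only [Pi.mul_apply]
  field_simp
  ring

theorem concaveOn_mul_one_sub_mul_binEntropyDeriv :
    ConcaveOn ℝ (Ioc 0 (1 / 2)) fun x => x * (1 - x) * binEntropyDeriv x := by
  have hint : interior (Ioc (0 : ℝ) (1 / 2)) = Ioo 0 (1 / 2) := interior_Ioc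
  refine concaveOn_of_hasDerivWithinAt2_nonpos (convex_Ioc 0 (1 / 2))
    (f' := fun x => (1 - 2 * x) * binEntropyDeriv x - 1)
    (f'' := fun x => -2 * binEntropyDeriv x + (1 - 2 * x) * -(x * (1 - x))⁻¹) ?_ ?_ ?_ ?_
  · exact fun x hx => (hasDerivAt_mul_one_sub_mul_binEntropyDeriv hx.1
      (by linarith [hx.2])).continuousAt.continuousWithinAt
  all_goals rw [hint]; rintro x ⟨hx₀, hx₁⟩
  · exact (hasDerivAt_mul_one_sub_mul_binEntropyDeriv hx₀ (by linarith)).hasDerivWithinAt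
  · exact (((hasDerivAt_id x).const_mul 2).const_sub 1 |>.mul
      (hasDerivAt_binEntropyDeriv hx₀ (by linarith))).sub_const 1
      |>.hasDerivWithinAt |>.congr_deriv (by simp)
  · have hL := binEntropyDeriv_nonneg hx₀ hx₁.le
    have h : 0 ≤ (1 - 2 * x) * (x * (1 - x))⁻¹ :=
      mul_nonneg (by linarith) (inv_nonneg.2 (mul_nonneg hx₀.le (by linarith)))
    linarith

theorem noiseParam_eq (p τ : ℝ) : noiseParam p τ = (1 - 2 * τ) * p + 2 * τ * (1 / 2) := by
  unfold noiseParam; ring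

theorem hasDerivAt_noiseParam (p τ : ℝ) :
    HasDerivAt (fun x => noiseParam x τ) (1 - 2 * τ) p := by
  simp only [noiseParam_eq]
  simpa using ((hasDerivAt_id p).const_mul (1 - 2 * τ)).add_const (2 * τ * (1 / 2))

theorem noiseParam_mem_Ioc {p τ : ℝ} (hτ₀ : 0 ≤ τ) (hτ₁ : τ ≤ 1 / 2)
    (hp : p ∈ Ioc 0 (1 / 2)) : noiseParam p τ ∈ Ioc 0 (1 / 2) := by
  obtain ⟨hp₀, hp₁⟩ := hp
  rw [noiseParam_eq]
  constructor <;> nlinarith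

theorem one_sub_two_mul_mul_binEntropyDeriv_le_noiseParam {x τ : ℝ} (hτ₀ : 0 ≤ τ)
    (hτ₁ : τ ≤ 1 / 2) (hx : x ∈ Ioc 0 (1 / 2)) :
    (1 - 2 * τ) * (x * (1 - x) * binEntropyDeriv x) ≤
      noiseParam x τ * (1 - noiseParam x τ) * binEntropyDeriv (noiseParam x τ) := by
  have h := concaveOn_mul_one_sub_mul_binEntropyDeriv.2 hx (right_mem_Ioc.2 one_half_pos)
    (by linarith : 0 ≤ 1 - 2 * τ) (by linarith : 0 ≤ 2 * τ) (sub_add_cancel 1 (2 * τ))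
  have hhalf : binEntropyDeriv (1 / 2) = 0 := by norm_num [binEntropyDeriv]
  simp only [smul_eq_mul, hhalf, mul_zero, add_zero] at h
  rwa [noiseParam_eq]

theorem monotoneOn_binEntropyDeriv_noiseParam_div {τ : ℝ} (hτ₀ : 0 ≤ τ) (hτ₁ : τ ≤ 1 / 2) :
    MonotoneOn (fun x => (1 - 2 * τ) * binEntropyDeriv (noiseParam x τ) / binEntropyDeriv x)
      (Ioo 0 (1 / 2)) := by
  have hderiv : ∀ x ∈ Ioo (0 : ℝ) (1 / 2), HasDerivAt
      (fun x => (1 - 2 * τ) * binEntropyDeriv (noiseParam x τ) / binEntropyDeriv x)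
      (((1 - 2 * τ) * (-(noiseParam x τ * (1 - noiseParam x τ))⁻¹ * (1 - 2 * τ)) *
          binEntropyDeriv x -
        (1 - 2 * τ) * binEntropyDeriv (noiseParam x τ) * -(x * (1 - x))⁻¹) /
        binEntropyDeriv x ^ 2) x := by
    rintro x ⟨hx₀, hx₁⟩
    obtain ⟨hN₀, hN₁⟩ := noiseParam_mem_Ioc hτ₀ hτ₁ ⟨hx₀, hx₁.le⟩
    exact (((hasDerivAt_binEntropyDeriv hN₀ (by linarith)).comp x
      (hasDerivAt_noiseParam x τ)).const_mul (1 - 2 * τ)).div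
      (hasDerivAt_binEntropyDeriv hx₀ (by linarith)) (binEntropyDeriv_pos hx₀ hx₁).ne'
  refine monotoneOn_of_hasDerivWithinAt_nonneg (convex_Ioo 0 (1 / 2))
    (fun x hx => (hderiv x hx).continuousAt.continuousWithinAt)
    (by simpa only [interior_Ioo] using fun x hx => (hderiv x hx).hasDerivWithinAt) ?_
  rw [interior_Ioo]
  rintro x ⟨hx₀, hx₁⟩
  obtain ⟨hN₀, hN₁⟩ := noiseParam_mem_Ioc hτ₀ hτ₁ ⟨hx₀, hx₁.le⟩
  have hx : 0 < x * (1 - x) := mul_pos hx₀ (by linarith)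
  have hN : 0 < noiseParam x τ * (1 - noiseParam x τ) := mul_pos hN₀ (by linarith)
  have key : (1 - 2 * τ) * binEntropyDeriv x / (noiseParam x τ * (1 - noiseParam x τ)) ≤
      binEntropyDeriv (noiseParam x τ) / (x * (1 - x)) := by
    rw [div_le_div_iff₀ hN hx]
    linarith [one_sub_two_mul_mul_binEntropyDeriv_le_noiseParam hτ₀ hτ₁ ⟨hx₀, hx₁.le⟩]
  refine div_nonneg ?_ (sq_nonneg _)
  calc (0 : ℝ) ≤ (1 - 2 * τ) * (binEntropyDeriv (noiseParam x τ) / (x * (1 - x)) -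
        (1 - 2 * τ) * binEntropyDeriv x / (noiseParam x τ * (1 - noiseParam x τ))) :=
        mul_nonneg (by linarith) (sub_nonneg.2 key)
    _ = _ := by ring

theorem hasDerivAt_binEntropy_noiseParam {x τ : ℝ} (hτ₀ : 0 ≤ τ) (hτ₁ : τ ≤ 1 / 2)
    (hx : x ∈ Ioc 0 (1 / 2)) :
    HasDerivAt (fun y => binEntropy (noiseParam y τ))
      ((1 - 2 * τ) * binEntropyDeriv (noiseParam x τ)) x := by
  obtain ⟨hN₀, hN₁⟩ := noiseParam_mem_Ioc hτ₀ hτ₁ hx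
  exact ((hasDerivAt_binEntropy hN₀.ne' (by linarith)).comp x
    (hasDerivAt_noiseParam x τ)).congr_deriv (mul_comm _ _)

theorem binEnt_eq_binEntropy_div (p : ℝ) : binEnt p = binEntropy p / log 2 := by
  unfold binEnt binEntropy logb
  rw [log_inv, log_inv]
  ring

/-- Convexity of the noise curve `{(H(p), H(N(p,τ))) : p ∈ [0,1/2]}`: whenever
`H(p)` is a convex combination of `H(p₁)` and `H(p₂)`, the value `H(N(p,τ))`
is at most the corresponding convex combination of `H(N(p₁,τ))` and
`H(N(p₂,τ))`. -/
theorem noise_curve_convex (τ : ℝ) (hτ : τ ∈ Set.Ioo (0 : ℝ) (1 / 2))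
    (p p₁ p₂ : ℝ) (hp : p ∈ Set.Icc (0 : ℝ) (1 / 2))
    (hp₁ : p₁ ∈ Set.Icc (0 : ℝ) (1 / 2)) (hp₂ : p₂ ∈ Set.Icc (0 : ℝ) (1 / 2))
    (t : ℝ) (ht : t ∈ Set.Icc (0 : ℝ) 1)
    (hcomb : binEnt p = (1 - t) * binEnt p₁ + t * binEnt p₂) :
    binEnt (noiseParam p τ) ≤
      (1 - t) * binEnt (noiseParam p₁ τ) + t * binEnt (noiseParam p₂ τ) := by
  have hconv := convexOn_image_comp_invFunOn_of_monotoneOn_deriv_div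
    binEntropy_continuous.continuousOn (by unfold noiseParam; fun_prop)
    (fun x hx => hasDerivAt_binEntropy hx.1.ne' (by linarith [hx.2]))
    (fun x hx => hasDerivAt_binEntropy_noiseParam hτ.1.le hτ.2.le ⟨hx.1, hx.2.le⟩)
    (fun x hx => binEntropyDeriv_pos hx.1 hx.2)
    (monotoneOn_binEntropyDeriv_noiseParam_div hτ.1.le hτ.2.le)
  have hinv : LeftInvOn (Function.invFunOn binEntropy (Icc 0 (1 / 2))) binEntropy
      (Icc 0 (1 / 2)) := by
    rw [one_div]
    exact binEntropy_strictMonoOn.injOn.leftInvOn_invFunOn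
  have hlog : 0 < log 2 := log_pos one_lt_two
  have hcomb' : binEntropy p = (1 - t) * binEntropy p₁ + t * binEntropy p₂ := by
    simp only [binEnt_eq_binEntropy_div] at hcomb
    field_simp [hlog.ne'] at hcomb
    linear_combination hcomb
  have key := hconv.2 (mem_image_of_mem _ hp₁) (mem_image_of_mem _ hp₂)
    (sub_nonneg.2 ht.2) ht.1 (sub_add_cancel 1 t)
  simp only [smul_eq_mul, Function.comp_apply, ← hcomb', hinv hp, hinv hp₁, hinv hp₂] at key
  simp only [binEnt_eq_binEntropy_div]
  calc binEntropy (noiseParam p τ) / log 2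
      ≤ ((1 - t) * binEntropy (noiseParam p₁ τ) + t * binEntropy (noiseParam p₂ τ)) / log 2 :=
        div_le_div_of_nonneg_right key hlog.le
    _ = _ := by ring
end

section
/- For fixed c ∈ (0,1), the function v ↦ ln((1+cv)/(1-cv)) / ln((1+v)/(1-v)) is (weakly) decreasing on (0,1). -/
/-!
Since `log ((1 + x) / (1 - x)) = 2 artanh x`, the ratio is `artanh (c v) / artanh v`.
For a positive function `f`, the logarithmic derivative of `v ↦ f (c v) / f v` is
`(E (c v) - E v) / v`, where `E x = x f' x / f x` is the elasticity of `f`; so the ratio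
decreases as soon as `E` increases. For `artanh` one has `E x = x / ((1 - x²) artanh x)`, whose
derivative has the sign of `(1 + x²) artanh x - x`, and this is nonnegative because
`artanh x ≥ x` on `[0, 1)` (the first term of the series `artanh x = ∑ x^(2k+1) / (2k+1)`).
-/

open Set

theorem antitoneOn_comp_const_mul_div_of_monotoneOn_elasticity {f f' : ℝ → ℝ} {r c : ℝ}
    (hc₀ : 0 < c) (hc₁ : c ≤ 1) (hf : ∀ x ∈ Ioo 0 r, HasDerivAt f (f' x) x)
    (hf_pos : ∀ x ∈ Ioo 0 r, 0 < f x)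
    (hE : MonotoneOn (fun x => x * f' x / f x) (Ioo 0 r)) :
    AntitoneOn (fun v => f (c * v) / f v) (Ioo 0 r) := by
  have hcv_le : ∀ v ∈ Ioo 0 r, c * v ≤ v := fun v hv => mul_le_of_le_one_left hv.1.le hc₁
  have hcv : ∀ v ∈ Ioo 0 r, c * v ∈ Ioo 0 r := fun v hv =>
    ⟨mul_pos hc₀ hv.1, (hcv_le v hv).trans_lt hv.2⟩
  have hderiv : ∀ v ∈ Ioo 0 r, HasDerivAt (fun v => f (c * v) / f v)
      ((f' (c * v) * c * f v - f (c * v) * f' v) / f v ^ 2) v := fun v hv =>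
    ((hf _ (hcv v hv)).comp v (hasDerivAt_const_mul c)).div (hf v hv) (hf_pos v hv).ne'
  refine antitoneOn_of_hasDerivWithinAt_nonpos (convex_Ioo 0 r)
    (fun v hv => (hderiv v hv).continuousAt.continuousWithinAt)
    (fun v hv => (hderiv v (interior_subset hv)).hasDerivWithinAt) ?_
  rw [interior_Ioo]
  intro v hv
  have hE_le : c * v * f' (c * v) / f (c * v) ≤ v * f' v / f v :=
    hE (hcv v hv) hv (hcv_le v hv)
  rw [div_le_div_iff₀ (hf_pos _ (hcv v hv)) (hf_pos v hv)] at hE_le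
  have hnum : f' (c * v) * c * f v ≤ f (c * v) * f' v :=
    le_of_mul_le_mul_left (by linarith) hv.1
  exact div_nonpos_of_nonpos_of_nonneg (sub_nonpos.mpr hnum) (sq_nonneg _)

namespace Real

theorem artanh_eq_half_sub_log {x : ℝ} (hx : x ∈ Ioo (-1) 1) :
    artanh x = (log (1 + x) - log (1 - x)) / 2 := by
  rw [artanh_eq_half_log (Ioo_subset_Icc_self hx),
    log_div (by linarith [hx.1]) (by linarith [hx.2])]
  ring

theorem hasDerivAt_artanh {x : ℝ} (hx : x ∈ Ioo (-1) 1) :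
    HasDerivAt artanh (1 - x ^ 2)⁻¹ x := by
  have h₁ : 1 + x ≠ 0 := by linarith [hx.1]
  have h₂ : 1 - x ≠ 0 := by linarith [hx.2]
  have hlog : HasDerivAt (fun y => (log (1 + y) - log (1 - y)) / 2) (1 - x ^ 2)⁻¹ x := by
    refine ((((hasDerivAt_id' x).const_add 1).log h₁).sub
      (((hasDerivAt_id' x).const_sub 1).log h₂)).div_const 2 |>.congr_deriv ?_
    rw [show 1 - x ^ 2 = (1 + x) * (1 - x) by ring]
    field_simp
    ring
  exact hlog.congr_of_eventuallyEq <| Filter.eventuallyEq_of_mem (isOpen_Ioo.mem_nhds hx)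
    fun y hy => artanh_eq_half_sub_log hy

theorem self_le_artanh {x : ℝ} (hx₀ : 0 ≤ x) (hx₁ : x < 1) : x ≤ artanh x := by
  have hsum := hasSum_log_sub_log_of_abs_lt_one (abs_lt.mpr ⟨by linarith, hx₁⟩)
  have hfirst := le_hasSum hsum 0 fun k _ => by positivity
  rw [artanh_eq_half_sub_log ⟨by linarith, hx₁⟩]
  norm_num at hfirst
  linarith

theorem monotoneOn_elasticity_artanh :
    MonotoneOn (fun x => x * (1 - x ^ 2)⁻¹ / artanh x) (Ioo 0 1) := by
  have hderiv : ∀ x ∈ Ioo (0 : ℝ) 1, HasDerivAt (fun x => x * (1 - x ^ 2)⁻¹ / artanh x)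
      (((1 + x ^ 2) * artanh x - x) / ((1 - x ^ 2) ^ 2 * artanh x ^ 2)) x := by
    intro x hx
    have hq : 1 - x ^ 2 ≠ 0 := by nlinarith [hx.1, hx.2]
    have hA : artanh x ≠ 0 := (artanh_pos hx).ne'
    refine ((hasDerivAt_id' x).mul (((hasDerivAt_pow 2 x).const_sub 1).inv hq)).div
      (hasDerivAt_artanh ⟨by linarith [hx.1], hx.2⟩) hA |>.congr_deriv ?_
    simp only [Pi.mul_apply, Pi.inv_apply]
    field_simp
    ring
  refine monotoneOn_of_hasDerivWithinAt_nonneg (convex_Ioo 0 1)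
    (fun x hx => (hderiv x hx).continuousAt.continuousWithinAt)
    (fun x hx => (hderiv x (interior_subset hx)).hasDerivWithinAt) ?_
  rw [interior_Ioo]
  intro x hx
  have hx_le := self_le_artanh hx.1.le hx.2
  have hA := artanh_pos hx
  exact div_nonneg (by nlinarith) (by positivity)

end Real

/-- For fixed `c ∈ (0,1)`, the ratio `ln((1+cv)/(1-cv)) / ln((1+v)/(1-v))`
is weakly decreasing in `v` on `(0,1)`. -/
theorem log_ratio_antitone (c : ℝ) (hc : c ∈ Set.Ioo (0 : ℝ) 1) :
    AntitoneOn (fun v : ℝ =>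
      Real.log ((1 + c * v) / (1 - c * v)) / Real.log ((1 + v) / (1 - v)))
      (Set.Ioo (0 : ℝ) 1) := by
  have hartanh : AntitoneOn (fun v => Real.artanh (c * v) / Real.artanh v) (Ioo 0 1) :=
    antitoneOn_comp_const_mul_div_of_monotoneOn_elasticity hc.1 hc.2.le
      (fun x hx => Real.hasDerivAt_artanh ⟨by linarith [hx.1], hx.2⟩)
      (fun x hx => Real.artanh_pos hx) Real.monotoneOn_elasticity_artanh
  refine hartanh.congr fun v hv => ?_
  have hsub : Ioo (0 : ℝ) 1 ⊆ Icc (-1) 1 := Ioo_subset_Icc_self.trans (by gcongr; norm_num)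
  have hcv : c * v ∈ Ioo 0 1 :=
    ⟨mul_pos hc.1 hv.1, mul_lt_one_of_nonneg_of_lt_one_left hc.1.le hc.2 hv.2.le⟩
  dsimp only
  rw [Real.artanh_eq_half_log (hsub hcv), Real.artanh_eq_half_log (hsub hv),
    mul_div_mul_left _ _ one_half_pos.ne']
end

section
/- Let x₁ > x₂ > … > x_n be reals and m₁,…,m_n, m'₁,…,m'_n positive reals such that m'_j/m'_i ≥ m_j/m_i whenever j > i. Then the weighted average (Σᵢ m'ᵢ xᵢ)/(Σᵢ m'ᵢ) ≤ (Σᵢ mᵢ xᵢ)/(Σᵢ mᵢ). -/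
open Finset

/-! The ratio `r = m' / m` is monotone while `x` is antitone, so `r` and `x` antivary, and
Chebyshev's sum inequality with weights `m` gives `(∑ m r x) (∑ m) ≤ (∑ m r) (∑ m x)`;
since `m r = m'`, this is the claim after clearing denominators. -/

theorem AntivaryOn.sum_mul_mul_sum_le {ι α : Type*} [CommRing α] [LinearOrder α]
    [IsStrictOrderedRing α] {s : Finset ι} {w f g : ι → α} (hw : ∀ i ∈ s, 0 ≤ w i)
    (hfg : AntivaryOn f g s) :
    (∑ i ∈ s, w i * f i * g i) * ∑ i ∈ s, w i ≤ (∑ i ∈ s, w i * f i) * ∑ i ∈ s, w i * g i := by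
  have expand : ∑ i ∈ s, ∑ j ∈ s, w i * w j * ((f j - f i) * (g j - g i)) =
      2 * ((∑ i ∈ s, w i * f i * g i) * ∑ i ∈ s, w i
        - (∑ i ∈ s, w i * f i) * ∑ i ∈ s, w i * g i) := by
    calc _ = ∑ i ∈ s, ∑ j ∈ s, (w i * f i * g i * w j + w i * (w j * f j * g j)
          - w i * f i * (w j * g j) - w i * g i * (w j * f j)) :=
          sum_congr rfl fun i _ ↦ sum_congr rfl fun j _ ↦ by ring
      _ = _ := by simp only [sum_add_distrib, sum_sub_distrib, ← mul_sum, ← sum_mul]; ring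
  have double_sum_nonpos : ∑ i ∈ s, ∑ j ∈ s, w i * w j * ((f j - f i) * (g j - g i)) ≤ 0 :=
    sum_nonpos fun i hi ↦ sum_nonpos fun j hj ↦
      mul_nonpos_of_nonneg_of_nonpos (mul_nonneg (hw i hi) (hw j hj)) (hfg.sub_mul_sub_nonpos hi hj)
  linarith

theorem div_le_div_iff_div_le_div {α : Type*} [Field α] [LinearOrder α] [IsStrictOrderedRing α]
    {a b c d : α} (ha : 0 < a) (hb : 0 < b) (hc : 0 < c) :
    b / a ≤ d / c ↔ c / a ≤ d / b := by
  rw [div_le_div_iff₀ ha hc, div_le_div_iff₀ ha hb, mul_comm b c]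

/-- Center-of-gravity monotonicity: if the points `x₁ > x₂ > … > xₙ` are
reweighted so that the relative weight of later (smaller) points increases,
then the weighted average decreases. -/
theorem center_of_gravity_monotone {n : ℕ} (x m m' : Fin n → ℝ)
    (hx : ∀ i j : Fin n, i < j → x j < x i)
    (hm : ∀ i, 0 < m i) (hm' : ∀ i, 0 < m' i)
    (hratio : ∀ i j : Fin n, i < j → m j / m i ≤ m' j / m' i) :
    (∑ i, m' i * x i) / (∑ i, m' i) ≤ (∑ i, m i * x i) / (∑ i, m i) := by
  have ratio_mono : Monotone fun i ↦ m' i / m i := monotone_iff_forall_lt.2 fun i j hij ↦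
    (div_le_div_iff_div_le_div (hm i) (hm j) (hm' i)).1 (hratio i j hij)
  have x_anti : Antitone x := StrictAnti.antitone fun i j ↦ hx i j
  have cheb := AntivaryOn.sum_mul_mul_sum_le (s := univ) (fun i _ ↦ (hm i).le)
    ((ratio_mono.antivary x_anti).antivaryOn _)
  simp only [mul_div_cancel₀ _ (hm _).ne'] at cheb
  rcases isEmpty_or_nonempty (Fin n) with _ | _
  · simp
  rw [div_le_div_iff₀ (sum_pos (fun i _ ↦ hm' i) univ_nonempty)
    (sum_pos (fun i _ ↦ hm i) univ_nonempty)]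
  linarith
end
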